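/- (Asymptotic minimizers are ordered) Let x, y be global minimizers whose domain of crossing is finite, and suppose |x_i - y_i| → 0 as i → +∞ or as i → -∞. Then x ≥ y or y ≥ x componentwise (the domain of crossing is empty). -/

import Mathlib

/-!
The heart of the proof is that `m = min x y` is again a global minimizer. The twist makes every
`f_j` submodular, so replacing `(x, y)` by `(min x y, max x y)` does not raise the energy of any
bond. To compare with the minimizers `x` and `y`, which only admit variations of finite support,
the pair `(min x y, max x y)` is used on a half-line `S` only and continued by `(x, y)` off `S`.
The end of `S` is placed where `|x - y| ≤ ε`; towards the other end `x` and `y` are ordered beyond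
the finite crossing domain, so the cut pair differs from `(x, y)` only on a finite set. By the
bound `C` on the mixed derivative, the at most `r²` bonds crossing the cut cost at most `r² C ε²`.

A global minimizer solves the Euler–Lagrange equations, and the strict twist `λ > 0` gives a
strong maximum principle: as `m ≤ x`, `m ≤ y` and `m` touches `x` or `y` at site `0`, `m = x` or
`m = y`.
-/

open Finset Filter Topology

noncomputable def d1 (f : ℝ → ℝ → ℝ) (ν μ : ℝ) : ℝ := deriv (fun t => f t μ) ν
noncomputable def d2 (f : ℝ → ℝ → ℝ) (ν μ : ℝ) : ℝ := deriv (fun t => f ν t) μ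
noncomputable def d11 (f : ℝ → ℝ → ℝ) (ν μ : ℝ) : ℝ := deriv (fun t => d1 f t μ) ν
noncomputable def d12 (f : ℝ → ℝ → ℝ) (ν μ : ℝ) : ℝ := deriv (fun t => d2 f t μ) ν
noncomputable def d22 (f : ℝ → ℝ → ℝ) (ν μ : ℝ) : ℝ := deriv (fun t => d2 f ν t) μ

/-- The local energy at site `i` of the sequence `z`:  `S_i(z) = ∑_{j=1}^r f_j(z_i, z_{i+j})`. -/
noncomputable def siteE (r : ℕ) (f : ℕ → ℝ → ℝ → ℝ) (z : ℤ → ℝ) (i : ℤ) : ℝ :=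
  ∑ j ∈ Finset.Icc 1 r, f j (z i) (z (i + j))

/-- `W_B` for the segment `B = [a,b] ⊂ ℤ`. -/
noncomputable def Wseg (r : ℕ) (f : ℕ → ℝ → ℝ → ℝ) (a b : ℤ) (z : ℤ → ℝ) : ℝ :=
  ∑ i ∈ Finset.Icc a b, siteE r f z i

/-- A global minimizer: for every segment with interior `[a,b]` and every variation `v`
supported in `[a,b]`, the energy does not decrease. -/
def IsGlobalMin (r : ℕ) (f : ℕ → ℝ → ℝ → ℝ) (x : ℤ → ℝ) : Prop :=
  ∀ a b : ℤ, ∀ v : ℤ → ℝ, (∀ i, v i ≠ 0 → i ∈ Finset.Icc a b) →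
    Wseg r f (a - r) b x ≤ Wseg r f (a - r) b (x + v)

/-- The variational monotone recurrence relation `∑_{j=i-r}^{i} ∂_i S_j(x) = 0` at site `i`. -/
def SolvesEL (r : ℕ) (f : ℕ → ℝ → ℝ → ℝ) (x : ℤ → ℝ) (i : ℤ) : Prop :=
  (∑ j ∈ Finset.Icc 1 r, (d1 (f j) (x i) (x (i + j)) + d2 (f j) (x (i - j)) (x i))) = 0

/-- A local energy of range `r` in the sense of Definition 1.5 of the paper. -/
structure LocalEnergy (r : ℕ) (K lam : ℝ) where
  f : ℕ → ℝ → ℝ → ℝ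
  smooth : ∀ j, ContDiff ℝ 2 (fun p : ℝ × ℝ => f j p.1 p.2)
  periodic : ∀ j ν μ, f j (ν + 1) (μ + 1) = f j ν μ
  bound11 : ∀ j ν μ, |d11 (f j) ν μ| ≤ K / r
  bound12 : ∀ j ν μ, |d12 (f j) ν μ| ≤ K / r
  bound22 : ∀ j ν μ, |d22 (f j) ν μ| ≤ K / r
  coercive : ∀ j ∈ Finset.Icc 1 r, ∀ C : ℝ, ∃ R : ℝ, ∀ ν μ : ℝ, R ≤ |ν - μ| → C ≤ f j ν μ
  twist : ∀ j ∈ Finset.Icc 1 r, ∀ ν μ : ℝ, d12 (f j) ν μ ≤ -lam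

/-- `x` and `y` are weakly ordered on the set `s`. -/
def WOrd (x y : ℤ → ℝ) (s : Set ℤ) : Prop :=
  (∀ i ∈ s, x i ≤ y i) ∨ (∀ i ∈ s, y i ≤ x i)

/-- `D` is an interval outside of which (on both components of the complement)
`x` and `y` are weakly ordered. -/
def CrossProp (x y : ℤ → ℝ) (D : Set ℤ) : Prop :=
  D.OrdConnected ∧ WOrd x y {i | ∀ j ∈ D, i < j} ∧ WOrd x y {i | ∀ j ∈ D, j < i}

/-- The domain of crossing of `x` and `y`: the minimal interval `D` such that `x` and `y`
are weakly ordered on the connected components of its complement. -/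
def IsCrossingDomain (x y : ℤ → ℝ) (D : Set ℤ) : Prop :=
  CrossProp x y D ∧ ∀ D' : Set ℤ, CrossProp x y D' → D ⊆ D'

/-- The translation `(τ_{k,l} x)_i = x_{i-k} + l`. -/
def transl (k l : ℤ) (x : ℤ → ℝ) : ℤ → ℝ := fun i => x (i - k) + l

/-- The Birkhoff property. -/
def Birkhoff (x : ℤ → ℝ) : Prop :=
  ∀ k l : ℤ, (∀ i, transl k l x i ≤ x i) ∨ (∀ i, x i ≤ transl k l x i)

open Function

section Slices

variable {E : Type*} [NormedAddCommGroup E] [NormedSpace ℝ E] {G : ℝ × ℝ → E}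

lemma hasDerivAt_fst_slice (hG : Differentiable ℝ G) (ν μ : ℝ) :
    HasDerivAt (fun t => G (t, μ)) (fderiv ℝ G (ν, μ) (1, 0)) ν :=
  (hG (ν, μ)).hasFDerivAt.comp_hasDerivAt ν ((hasDerivAt_id ν).prodMk (hasDerivAt_const ν μ))

lemma hasDerivAt_snd_slice (hG : Differentiable ℝ G) (ν μ : ℝ) :
    HasDerivAt (fun t => G (ν, t)) (fderiv ℝ G (ν, μ) (0, 1)) μ :=
  (hG (ν, μ)).hasFDerivAt.comp_hasDerivAt μ ((hasDerivAt_const μ ν).prodMk (hasDerivAt_id μ))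

end Slices

section PartialDerivatives

variable {f : ℝ → ℝ → ℝ}

lemma d1_eq_fderiv (hf : Differentiable ℝ (uncurry f)) (ν μ : ℝ) :
    d1 f ν μ = fderiv ℝ (uncurry f) (ν, μ) (1, 0) :=
  (hasDerivAt_fst_slice hf ν μ).deriv

lemma d2_eq_fderiv (hf : Differentiable ℝ (uncurry f)) (ν μ : ℝ) :
    d2 f ν μ = fderiv ℝ (uncurry f) (ν, μ) (0, 1) :=
  (hasDerivAt_snd_slice hf ν μ).deriv

lemma hasDerivAt_d2 (hf : Differentiable ℝ (uncurry f)) (ν μ : ℝ) :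
    HasDerivAt (fun t => f ν t) (d2 f ν μ) μ :=
  (hasDerivAt_snd_slice hf ν μ).differentiableAt.hasDerivAt

lemma hasDerivAt_d2_sub_d2 (hf : Differentiable ℝ (uncurry f)) (a c t : ℝ) :
    HasDerivAt (fun t => f c t - f a t) (d2 f c t - d2 f a t) t :=
  (hasDerivAt_d2 hf c t).sub (hasDerivAt_d2 hf a t)

lemma hasDerivAt_line (hf : Differentiable ℝ (uncurry f)) (u w a b : ℝ) :
    HasDerivAt (fun t => f (u + t * a) (w + t * b)) (a * d1 f u w + b * d2 f u w) 0 := by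
  have hline : HasDerivAt (fun t : ℝ => (u + t * a, w + t * b)) (a, b) 0 :=
    (((hasDerivAt_id 0).mul_const a).const_add u).prodMk
      (((hasDerivAt_id 0).mul_const b).const_add w) |>.congr_deriv (by simp)
  have hF := (hf (u, w)).hasFDerivAt.comp_hasDerivAt_of_eq 0 hline (by simp)
  have hab : ((a, b) : ℝ × ℝ) = a • ((1 : ℝ), (0 : ℝ)) + b • ((0 : ℝ), (1 : ℝ)) := by simp
  rwa [hab, map_add, map_smul, map_smul, ← d1_eq_fderiv hf, ← d2_eq_fderiv hf] at hF

lemma differentiable_fderiv_uncurry (hf : ContDiff ℝ 2 (uncurry f)) :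
    Differentiable ℝ (fderiv ℝ (uncurry f)) :=
  (hf.fderiv_right le_rfl).differentiable one_ne_zero

lemma hasDerivAt_d2_fst (hf : ContDiff ℝ 2 (uncurry f)) (ν μ : ℝ) :
    HasDerivAt (fun s => d2 f s μ) (fderiv ℝ (fderiv ℝ (uncurry f)) (ν, μ) (1, 0) (0, 1)) ν := by
  simp_rw [d2_eq_fderiv (hf.differentiable two_ne_zero)]
  simpa using (hasDerivAt_fst_slice (differentiable_fderiv_uncurry hf) ν μ).clm_apply
    (hasDerivAt_const ν ((0 : ℝ), (1 : ℝ)))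

lemma hasDerivAt_d1_snd (hf : ContDiff ℝ 2 (uncurry f)) (ν μ : ℝ) :
    HasDerivAt (fun t => d1 f ν t) (d12 f ν μ) μ := by
  simp_rw [d1_eq_fderiv (hf.differentiable two_ne_zero)]
  have h := (hasDerivAt_snd_slice (differentiable_fderiv_uncurry hf) ν μ).clm_apply
    (hasDerivAt_const μ ((1 : ℝ), (0 : ℝ)))
  rw [d12, (hasDerivAt_d2_fst hf ν μ).deriv,
    (hf.contDiffAt.isSymmSndFDerivAt (by simp)) (1, 0) (0, 1)]
  simpa using h

end PartialDerivatives

section Submodularity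

variable {f : ℝ → ℝ → ℝ}

lemma d2_sub_d2_le (hf : ContDiff ℝ 2 (uncurry f)) {M : ℝ} (hM : ∀ ν μ, d12 f ν μ ≤ M)
    (c : ℝ) {a b : ℝ} (hab : a ≤ b) : d2 f b c - d2 f a c ≤ M * (b - a) :=
  image_sub_le_mul_sub_of_deriv_le (fun s => (hasDerivAt_d2_fst hf s c).differentiableAt)
    (fun s => hM s c) hab

lemma d1_sub_d1_le (hf : ContDiff ℝ 2 (uncurry f)) {M : ℝ} (hM : ∀ ν μ, d12 f ν μ ≤ M)
    (c : ℝ) {a b : ℝ} (hab : a ≤ b) : d1 f c b - d1 f c a ≤ M * (b - a) :=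
  image_sub_le_mul_sub_of_deriv_le (fun t => (hasDerivAt_d1_snd hf c t).differentiableAt)
    (fun t => (hasDerivAt_d1_snd hf c t).deriv ▸ hM c t) hab

lemma add_le_add_of_d12_nonpos (hf : ContDiff ℝ 2 (uncurry f)) (htw : ∀ ν μ, d12 f ν μ ≤ 0)
    {a b c d : ℝ} (hac : a ≤ c) (hdb : d ≤ b) : f a d + f c b ≤ f a b + f c d := by
  have hG := hasDerivAt_d2_sub_d2 (hf.differentiable two_ne_zero) a c
  have hanti := antitone_of_deriv_nonpos (fun t => (hG t).differentiableAt) fun t => by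
    rw [(hG t).deriv]
    simpa using d2_sub_d2_le hf htw t hac
  linarith [hanti hdb]

lemma abs_sub_le_of_abs_deriv_le {g : ℝ → ℝ} (hg : Differentiable ℝ g) {M : ℝ}
    (hM : ∀ t, |deriv g t| ≤ M) (u v : ℝ) : |g v - g u| ≤ M * |v - u| := by
  simpa only [Real.norm_eq_abs] using convex_univ.norm_image_sub_le_of_norm_deriv_le
    (fun t _ => hg t) (fun t _ => hM t) (Set.mem_univ u) (Set.mem_univ v)

lemma abs_second_difference_le (hf : ContDiff ℝ 2 (uncurry f)) {C : ℝ}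
    (hbd : ∀ ν μ, |d12 f ν μ| ≤ C)
    (a b c d : ℝ) : |f c b - f a b - (f c d - f a d)| ≤ C * |c - a| * |b - d| := by
  have hG := hasDerivAt_d2_sub_d2 (hf.differentiable two_ne_zero) a c
  refine abs_sub_le_of_abs_deriv_le (fun t => (hG t).differentiableAt) (fun t => ?_) d b
  rw [(hG t).deriv]
  exact abs_sub_le_of_abs_deriv_le (fun s => (hasDerivAt_d2_fst hf s t).differentiableAt)
    (fun s => hbd s t) a c

lemma add_le_add_add_of_rearrange (hf : ContDiff ℝ 2 (uncurry f)) {C : ℝ}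
    (hbd : ∀ ν μ, |d12 f ν μ| ≤ C) {a b c d a' b' c' d' : ℝ}
    (h₁ : (a' = a ∧ c' = c) ∨ (a' = c ∧ c' = a)) (h₂ : (b' = b ∧ d' = d) ∨ (b' = d ∧ d' = b)) :
    f a' b' + f c' d' ≤ f a b + f c d + C * |a - c| * |b - d| := by
  have hC : 0 ≤ C * |a - c| * |b - d| := by
    have := (abs_nonneg _).trans (hbd 0 0)
    positivity
  have hswap := (abs_le.1 (abs_second_difference_le hf hbd a b c d)).2
  rw [abs_sub_comm c a] at hswap
  rcases h₁ with ⟨rfl, rfl⟩ | ⟨rfl, rfl⟩ <;> rcases h₂ with ⟨rfl, rfl⟩ | ⟨rfl, rfl⟩ <;> linarith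

lemma min_add_max_le (hf : ContDiff ℝ 2 (uncurry f)) (htw : ∀ ν μ, d12 f ν μ ≤ 0) (a b c d : ℝ) :
    f (min a c) (min b d) + f (max a c) (max b d) ≤ f a b + f c d := by
  rcases le_total a c with h₁ | h₁ <;> rcases le_total b d with h₂ | h₂
  · simp only [min_eq_left, max_eq_right, h₁, h₂, le_refl]
  · rw [min_eq_left h₁, max_eq_right h₁, min_eq_right h₂, max_eq_left h₂]
    linarith [add_le_add_of_d12_nonpos hf htw h₁ h₂]
  · rw [min_eq_right h₁, max_eq_left h₁, min_eq_left h₂, max_eq_right h₂]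
    linarith [add_le_add_of_d12_nonpos hf htw h₁ h₂]
  · rw [min_eq_right h₁, max_eq_left h₁, min_eq_right h₂, max_eq_left h₂, add_comm]

end Submodularity

section EulerLagrange

variable {r : ℕ} {f : ℕ → ℝ → ℝ → ℝ}

lemma IsGlobalMin.solvesEL (hsm : ∀ j, ContDiff ℝ 2 (uncurry (f j))) {z : ℤ → ℝ}
    (hz : IsGlobalMin r f z) (i : ℤ) : SolvesEL r f z i := by
  classical
  set e : ℤ → ℝ := Pi.single i 1
  have hmin : IsLocalMin (fun t : ℝ => Wseg r f (i - r) i (z + t • e)) 0 :=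
    Filter.Eventually.of_forall fun t => by
      simpa using hz i i (t • e) fun k hk => by
        simp_all [e, Pi.single_apply]
  have hderiv : HasDerivAt (fun t : ℝ => Wseg r f (i - r) i (z + t • e))
      (∑ k ∈ Icc (i - r) i, ∑ j ∈ Icc 1 r,
        (e k * d1 (f j) (z k) (z (k + j)) + e (k + j) * d2 (f j) (z k) (z (k + j)))) 0 := by
    simp only [Wseg, siteE, Pi.add_apply, Pi.smul_apply, smul_eq_mul]
    exact HasDerivAt.fun_sum fun k _ => HasDerivAt.fun_sum fun j _ =>
      hasDerivAt_line ((hsm j).differentiable two_ne_zero) _ _ _ _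
  have hi : i ∈ Icc (i - r) i := by simp
  have hij : ∀ j ∈ Icc 1 r, i - (j : ℤ) ∈ Icc (i - r) i := fun j hj => by
    simp only [Finset.mem_Icc] at hj ⊢
    omega
  have he : ∀ k j : ℤ, e (k + j) = (Pi.single (i - j) 1 : ℤ → ℝ) k := fun k j => by
    simp only [e, Pi.single_apply, ← eq_sub_iff_add_eq]
  unfold SolvesEL
  rw [← hmin.hasDerivAt_eq_zero hderiv, Finset.sum_comm]
  refine Finset.sum_congr rfl fun j hj => ?_
  simp only [he, Finset.sum_add_distrib]
  simp only [e, Pi.single_apply, ite_mul, one_mul, zero_mul, Finset.sum_ite_eq', if_pos hi,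
    if_pos (hij j hj), sub_add_cancel]

end EulerLagrange

section MaximumPrinciple

variable {r : ℕ} {f : ℕ → ℝ → ℝ → ℝ} {lam : ℝ}

lemma SolvesEL.eq_add_one_and_eq_sub_one (hsm : ∀ j, ContDiff ℝ 2 (uncurry (f j)))
    (hr : 1 ≤ r) (hlam : 0 < lam) (htw : ∀ j ∈ Icc 1 r, ∀ ν μ, d12 (f j) ν μ ≤ -lam)
    {m x : ℤ → ℝ} {k : ℤ} (hm : SolvesEL r f m k) (hx : SolvesEL r f x k)
    (hle : ∀ i, m i ≤ x i) (hk : m k = x k) :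
    m (k + 1) = x (k + 1) ∧ m (k - 1) = x (k - 1) := by
  unfold SolvesEL at hm hx
  have hterm : ∀ j ∈ Icc 1 r, lam * (x (k + j) - m (k + j) + (x (k - j) - m (k - j))) ≤
      (d1 (f j) (m k) (m (k + j)) + d2 (f j) (m (k - j)) (m k)) -
        (d1 (f j) (x k) (x (k + j)) + d2 (f j) (x (k - j)) (x k)) := fun j hj => by
    have h₁ := d1_sub_d1_le (hsm j) (htw j hj) (x k) (hle (k + j))
    have h₂ := d2_sub_d2_le (hsm j) (htw j hj) (x k) (hle (k - j))
    rw [hk]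
    linarith
  have hsum : ∑ j ∈ Icc 1 r, lam * (x (k + j) - m (k + j) + (x (k - j) - m (k - j))) ≤ 0 := by
    calc _ ≤ _ := Finset.sum_le_sum hterm
      _ = 0 := by rw [Finset.sum_sub_distrib, hm, hx, sub_zero]
  have hone := Finset.single_le_sum
    (f := fun j : ℕ => lam * (x (k + j) - m (k + j) + (x (k - j) - m (k - j))))
    (fun j _ => mul_nonneg hlam.le (add_nonneg (sub_nonneg.2 (hle _)) (sub_nonneg.2 (hle _))))
    (Finset.mem_Icc.2 ⟨le_rfl, hr⟩)
  have hup := hle (k + 1)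
  have hdown := hle (k - 1)
  push_cast at hone
  have hgap : x (k + 1) - m (k + 1) + (x (k - 1) - m (k - 1)) ≤ 0 := by nlinarith
  constructor <;> linarith

lemma eq_of_le_of_solvesEL (hsm : ∀ j, ContDiff ℝ 2 (uncurry (f j)))
    (hr : 1 ≤ r) (hlam : 0 < lam) (htw : ∀ j ∈ Icc 1 r, ∀ ν μ, d12 (f j) ν μ ≤ -lam)
    {m x : ℤ → ℝ} (hm : ∀ i, SolvesEL r f m i) (hx : ∀ i, SolvesEL r f x i)
    (hle : ∀ i, m i ≤ x i) {k : ℤ} (hk : m k = x k) : m = x := by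
  have step := fun i (hi : m i = x i) =>
    (hm i).eq_add_one_and_eq_sub_one hsm hr hlam htw (hx i) hle hi
  funext i
  induction i using Int.inductionOn' (b := k) with
  | zero => exact hk
  | succ i _ ih => exact (step i ih).1
  | pred i _ ih => exact (step i ih).2

end MaximumPrinciple

section Windows

variable {r : ℕ} {f : ℕ → ℝ → ℝ → ℝ}

lemma Wseg_congr {A B : ℤ} {z z' : ℤ → ℝ} (h : ∀ i, A ≤ i → i ≤ B + r → z i = z' i) :
    Wseg r f A B z = Wseg r f A B z' :=
  Finset.sum_congr rfl fun i hi => Finset.sum_congr rfl fun j hj => by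
    simp only [Finset.mem_Icc] at hi hj
    rw [h i hi.1 (by omega), h (i + j) (by omega) (by omega)]

lemma Wseg_sub_Wseg_of_support {a b A B : ℤ} {z z' : ℤ → ℝ}
    (hz : ∀ i, z' i ≠ z i → i ∈ Icc a b) (hA : A ≤ a - r) (hB : b ≤ B) :
    Wseg r f A B z' - Wseg r f A B z = Wseg r f (a - r) b z' - Wseg r f (a - r) b z := by
  have hfar : ∀ i, i < a - r ∨ b < i → siteE r f z' i = siteE r f z i := fun i hi =>
    Finset.sum_congr rfl fun j hj => by
      have hout : ∀ k, (k = i ∨ k = i + j) → z' k = z k := fun k hk => by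
        by_contra hne
        have := Finset.mem_Icc.1 (hz k hne)
        simp only [Finset.mem_Icc] at hj
        omega
      rw [hout i (.inl rfl), hout (i + j) (.inr rfl)]
  simp only [Wseg, ← Finset.sum_sub_distrib]
  refine (Finset.sum_subset (Finset.Icc_subset_Icc hA hB) fun i _ hi => ?_).symm
  rw [hfar i (by simp only [Finset.mem_Icc, not_and_or, not_le] at hi; omega), sub_self]

lemma IsGlobalMin.Wseg_le {x z : ℤ → ℝ} (hx : IsGlobalMin r f x) {a b A B : ℤ}
    (hz : ∀ i, z i ≠ x i → i ∈ Icc a b) (hA : A ≤ a - r) (hB : b ≤ B) :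
    Wseg r f A B x ≤ Wseg r f A B z := by
  have := hx a b (z - x) fun i hi => hz i (sub_ne_zero.1 hi)
  rw [add_sub_cancel] at this
  linarith [Wseg_sub_Wseg_of_support (f := f) hz hA hB]

end Windows

section Cuts

open Classical in
noncomputable def cutMin (S : Set ℤ) (x y : ℤ → ℝ) : ℤ → ℝ :=
  S.piecewise (fun i => min (x i) (y i)) x

open Classical in
noncomputable def cutMax (S : Set ℤ) (x y : ℤ → ℝ) : ℤ → ℝ :=
  S.piecewise (fun i => max (x i) (y i)) y

def IsSmallCut (r : ℕ) (x y : ℤ → ℝ) (ε : ℝ) (S : Set ℤ) (T : Finset ℤ) : Prop :=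
  T.card ≤ r ∧ ∀ i, ∀ j ∈ Icc 1 r, ¬(i ∈ S ↔ i + (j : ℤ) ∈ S) →
    i ∈ T ∧ |x i - y i| ≤ ε ∧ |x (i + j) - y (i + j)| ≤ ε

variable {S : Set ℤ} {x y : ℤ → ℝ}

lemma min_max_rearrange {α : Type*} [LinearOrder α] (a c : α) :
    (min a c = a ∧ max a c = c) ∨ (min a c = c ∧ max a c = a) := by
  rcases le_total a c with h | h
  · exact .inl ⟨min_eq_left h, max_eq_right h⟩
  · exact .inr ⟨min_eq_right h, max_eq_left h⟩

lemma cutMin_of_mem {i : ℤ} (hi : i ∈ S) : cutMin S x y i = min (x i) (y i) := by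
  classical
  exact Set.piecewise_eq_of_mem _ _ _ hi

lemma cutMin_ne {i : ℤ} (h : cutMin S x y i ≠ x i) : i ∈ S ∧ y i < x i := by
  classical
  by_cases hi : i ∈ S
  · rw [cutMin_of_mem hi] at h
    exact ⟨hi, lt_of_not_ge fun hxy => h (min_eq_left hxy)⟩
  · exact absurd (Set.piecewise_eq_of_notMem _ _ _ hi) h

lemma cutMax_ne {i : ℤ} (h : cutMax S x y i ≠ y i) : i ∈ S ∧ y i < x i := by
  classical
  by_cases hi : i ∈ S
  · rw [cutMax, Set.piecewise_eq_of_mem _ _ _ hi] at h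
    exact ⟨hi, lt_of_not_ge fun hxy => h (max_eq_right hxy)⟩
  · exact absurd (Set.piecewise_eq_of_notMem _ _ _ hi) h

lemma cutMin_cutMax_rearrange (S : Set ℤ) (x y : ℤ → ℝ) (i : ℤ) :
    (cutMin S x y i = x i ∧ cutMax S x y i = y i) ∨
      (cutMin S x y i = y i ∧ cutMax S x y i = x i) := by
  classical
  by_cases hi : i ∈ S
  · simpa only [cutMin, cutMax, Set.piecewise_eq_of_mem _ _ _ hi] using
      min_max_rearrange (x i) (y i)
  · simp only [cutMin, cutMax, Set.piecewise_eq_of_notMem _ _ _ hi, and_self, true_or]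

lemma add_cutMin_cutMax_le_of_iff {g : ℝ → ℝ → ℝ} (hg : ContDiff ℝ 2 (uncurry g))
    (htw : ∀ ν μ, d12 g ν μ ≤ 0) {i k : ℤ} (h : i ∈ S ↔ k ∈ S) :
    g (cutMin S x y i) (cutMin S x y k) + g (cutMax S x y i) (cutMax S x y k) ≤
      g (x i) (x k) + g (y i) (y k) := by
  classical
  by_cases hi : i ∈ S
  · simp only [cutMin, cutMax, Set.piecewise_eq_of_mem _ _ _ hi,
      Set.piecewise_eq_of_mem _ _ _ (h.1 hi)]
    exact min_add_max_le hg htw _ _ _ _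
  · simp only [cutMin, cutMax, Set.piecewise_eq_of_notMem _ _ _ hi,
      Set.piecewise_eq_of_notMem _ _ _ (mt h.2 hi), le_refl]

variable {r : ℕ} {f : ℕ → ℝ → ℝ → ℝ} {C ε : ℝ} {T : Finset ℤ}

lemma Wseg_cutMin_add_cutMax_le (hsm : ∀ j, ContDiff ℝ 2 (uncurry (f j)))
    (hbd : ∀ j ν μ, |d12 (f j) ν μ| ≤ C) (htw : ∀ j ∈ Icc 1 r, ∀ ν μ, d12 (f j) ν μ ≤ 0)
    (hS : IsSmallCut r x y ε S T) (A B : ℤ) :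
    Wseg r f A B (cutMin S x y) + Wseg r f A B (cutMax S x y) ≤
      Wseg r f A B x + Wseg r f A B y + r * (r * (C * ε ^ 2)) := by
  classical
  have hC : 0 ≤ C := (abs_nonneg _).trans (hbd 0 0 0)
  have hbond : ∀ i, ∀ j ∈ Icc 1 r,
      f j (cutMin S x y i) (cutMin S x y (i + j)) + f j (cutMax S x y i) (cutMax S x y (i + j)) ≤
        f j (x i) (x (i + j)) + f j (y i) (y (i + j)) + if i ∈ T then C * ε ^ 2 else 0 := by
    intro i j hj
    by_cases h : i ∈ S ↔ i + (j : ℤ) ∈ S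
    · have := add_cutMin_cutMax_le_of_iff (x := x) (y := y) (hsm j) (htw j hj) h
      split_ifs <;> nlinarith [sq_nonneg ε]
    · obtain ⟨hT, hεi, hεk⟩ := hS.2 i j hj h
      have hεC : C * |x i - y i| * |x (i + j) - y (i + j)| ≤ C * ε ^ 2 := by
        rw [mul_assoc, sq]
        exact mul_le_mul_of_nonneg_left
          (mul_le_mul hεi hεk (abs_nonneg _) ((abs_nonneg _).trans hεi)) hC
      rw [if_pos hT]
      linarith [add_le_add_add_of_rearrange (hsm j) (hbd j) (cutMin_cutMax_rearrange S x y i)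
        (cutMin_cutMax_rearrange S x y (i + j))]
  have herr : ∑ i ∈ Icc A B, ∑ j ∈ Icc 1 r, (if i ∈ T then C * ε ^ 2 else 0) ≤
      r * (r * (C * ε ^ 2)) := by
    calc _ = ∑ i ∈ Icc A B ∩ T, r * (C * ε ^ 2) := by
          rw [← Finset.sum_ite_mem]
          simp [Finset.sum_ite_irrel]
      _ ≤ ∑ i ∈ T, r * (C * ε ^ 2) :=
          Finset.sum_le_sum_of_subset_of_nonneg Finset.inter_subset_right fun _ _ _ => by positivity
      _ ≤ _ := by
          rw [Finset.sum_const, nsmul_eq_mul]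
          exact mul_le_mul_of_nonneg_right (by exact_mod_cast hS.1) (by positivity)
  calc _ = ∑ i ∈ Icc A B, ∑ j ∈ Icc 1 r, (f j (cutMin S x y i) (cutMin S x y (i + j)) +
        f j (cutMax S x y i) (cutMax S x y (i + j))) := by
        simp only [Wseg, siteE, ← Finset.sum_add_distrib]
    _ ≤ ∑ i ∈ Icc A B, ∑ j ∈ Icc 1 r, (f j (x i) (x (i + j)) + f j (y i) (y (i + j)) +
        if i ∈ T then C * ε ^ 2 else 0) :=
        Finset.sum_le_sum fun i _ => Finset.sum_le_sum fun j hj => hbond i j hj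
    _ ≤ _ := by
        simp only [Wseg, siteE, Finset.sum_add_distrib]
        linarith

end Cuts

lemma le_of_forall_pos_le_add_mul_sq {a b c : ℝ} (h : ∀ ε > 0, a ≤ b + c * ε ^ 2) : a ≤ b := by
  have hlim : Tendsto (fun ε : ℝ => b + c * ε ^ 2) (𝓝[>] 0) (𝓝 b) := by
    have hcont : Continuous fun ε : ℝ => b + c * ε ^ 2 := by fun_prop
    simpa using (hcont.tendsto 0).mono_left nhdsWithin_le_nhds
  exact ge_of_tendsto hlim (eventually_nhdsWithin_of_forall h)

section Asymptotic

variable {r : ℕ} {f : ℕ → ℝ → ℝ → ℝ} {C : ℝ} {x y : ℤ → ℝ}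

theorem isGlobalMin_min_of_smallCuts (hsm : ∀ j, ContDiff ℝ 2 (uncurry (f j)))
    (hbd : ∀ j ν μ, |d12 (f j) ν μ| ≤ C) (htw : ∀ j ∈ Icc 1 r, ∀ ν μ, d12 (f j) ν μ ≤ 0)
    (hx : IsGlobalMin r f x) (hy : IsGlobalMin r f y)
    (hcut : ∀ a b : ℤ, ∀ ε > 0, ∃ (S : Set ℤ) (T : Finset ℤ), Set.Icc (a - r) (b + r) ⊆ S ∧
      {i | i ∈ S ∧ y i < x i}.Finite ∧ IsSmallCut r x y ε S T) :
    IsGlobalMin r f (fun i => min (x i) (y i)) := by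
  intro a b w hw
  refine le_of_forall_pos_le_add_mul_sq (c := r * (r * C)) fun ε hε => ?_
  obtain ⟨S, T, hwin, hfin, hST⟩ := hcut a b ε hε
  obtain ⟨α₀, hα₀⟩ := hfin.bddBelow
  obtain ⟨β₀, hβ₀⟩ := hfin.bddAbove
  obtain ⟨α, β, hαa, hbβ, hmem⟩ : ∃ α β : ℤ, α ≤ a ∧ b ≤ β ∧
      ∀ i ∈ S, y i < x i → i ∈ Icc α β :=
    ⟨min α₀ a, max β₀ b, min_le_right _ _, le_max_right _ _, fun i hiS hi =>
      Finset.mem_Icc.2 ⟨min_le_of_left_le (hα₀ ⟨hiS, hi⟩), le_max_of_le_left (hβ₀ ⟨hiS, hi⟩)⟩⟩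
  -- `x ≤ cutMin + w` and `y ≤ cutMax` by minimality, `cutMin + cutMax ≤ x + y` up to the cut.
  have hxp : Wseg r f (α - r) β x ≤ Wseg r f (α - r) β (cutMin S x y + w) :=
    hx.Wseg_le (fun i hi => by
      by_cases hpi : cutMin S x y i = x i
      · have hab := Finset.mem_Icc.1 (hw i fun hwi => hi (by simp [hpi, hwi]))
        exact Finset.mem_Icc.2 ⟨hαa.trans hab.1, hab.2.trans hbβ⟩
      · exact hmem i (cutMin_ne hpi).1 (cutMin_ne hpi).2) le_rfl le_rfl
  have hyq : Wseg r f (α - r) β y ≤ Wseg r f (α - r) β (cutMax S x y) :=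
    hy.Wseg_le (fun i hi => hmem i (cutMax_ne hi).1 (cutMax_ne hi).2) le_rfl le_rfl
  have hsum := Wseg_cutMin_add_cutMax_le hsm hbd htw hST (α - r) β
  have hloc := Wseg_sub_Wseg_of_support (r := r) (f := f) (z := cutMin S x y)
    (z' := cutMin S x y + w) (fun i hi => hw i (by simpa using hi)) (sub_le_sub_right hαa _) hbβ
  have hm : ∀ z : ℤ → ℝ, Wseg r f (a - r) b (cutMin S x y + z) =
      Wseg r f (a - r) b ((fun i => min (x i) (y i)) + z) := fun z =>
    Wseg_congr fun i hi₁ hi₂ => by rw [Pi.add_apply, Pi.add_apply, cutMin_of_mem (hwin ⟨hi₁, hi₂⟩)]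
  have h0 := hm 0
  simp only [add_zero] at h0
  rw [← h0, ← hm w]
  linarith

lemma isSmallCut_Iic {N B : ℤ} {ε : ℝ} (hN : ∀ i ≥ N, |x i - y i| ≤ ε) (hB : N + r ≤ B) :
    IsSmallCut r x y ε (Set.Iic B) (Finset.Ioc (B - r) B) := by
  refine ⟨by simp, fun i j hj hij => ?_⟩
  simp only [Finset.mem_Icc, Set.mem_Iic] at hj hij
  have hiB : i ≤ B ∧ B < i + j := by omega
  exact ⟨Finset.mem_Ioc.2 ⟨by omega, hiB.1⟩, hN i (by omega), hN _ (by omega)⟩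

lemma isSmallCut_Ici {N A : ℤ} {ε : ℝ} (hN : ∀ i ≤ N, |x i - y i| ≤ ε) (hA : A + r ≤ N) :
    IsSmallCut r x y ε (Set.Ici A) (Finset.Ico (A - r) A) := by
  refine ⟨by simp, fun i j hj hij => ?_⟩
  simp only [Finset.mem_Icc, Set.mem_Ici] at hj hij
  have hiA : i < A ∧ A ≤ i + j := by omega
  exact ⟨Finset.mem_Ico.2 ⟨by omega, hiA.1⟩, hN i (by omega), hN _ (by omega)⟩

theorem isGlobalMin_min_of_tendsto_atTop (hsm : ∀ j, ContDiff ℝ 2 (uncurry (f j)))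
    (hbd : ∀ j ν μ, |d12 (f j) ν μ| ≤ C) (htw : ∀ j ∈ Icc 1 r, ∀ ν μ, d12 (f j) ν μ ≤ 0)
    (hx : IsGlobalMin r f x) (hy : IsGlobalMin r f y) (htail : ∀ᶠ i in atBot, x i ≤ y i)
    (hasym : Tendsto (fun i => |x i - y i|) atTop (𝓝 0)) :
    IsGlobalMin r f (fun i => min (x i) (y i)) := by
  refine isGlobalMin_min_of_smallCuts hsm hbd htw hx hy fun a b ε hε => ?_
  obtain ⟨N, hN⟩ := eventually_atTop.1 (hasym.eventually (eventually_le_nhds hε))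
  obtain ⟨P, hP⟩ := eventually_atBot.1 htail
  refine ⟨Set.Iic (max (b + r) (N + r)), _, fun i hi => le_max_of_le_left hi.2,
    (Set.finite_Icc P (max (b + r) (N + r))).subset fun i hi => ⟨?_, hi.1⟩,
    isSmallCut_Iic hN (le_max_right _ _)⟩
  exact le_of_lt (lt_of_not_ge fun h => (hP i h).not_gt hi.2)

theorem isGlobalMin_min_of_tendsto_atBot (hsm : ∀ j, ContDiff ℝ 2 (uncurry (f j)))
    (hbd : ∀ j ν μ, |d12 (f j) ν μ| ≤ C) (htw : ∀ j ∈ Icc 1 r, ∀ ν μ, d12 (f j) ν μ ≤ 0)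
    (hx : IsGlobalMin r f x) (hy : IsGlobalMin r f y) (htail : ∀ᶠ i in atTop, x i ≤ y i)
    (hasym : Tendsto (fun i => |x i - y i|) atBot (𝓝 0)) :
    IsGlobalMin r f (fun i => min (x i) (y i)) := by
  refine isGlobalMin_min_of_smallCuts hsm hbd htw hx hy fun a b ε hε => ?_
  obtain ⟨N, hN⟩ := eventually_atBot.1 (hasym.eventually (eventually_le_nhds hε))
  obtain ⟨P, hP⟩ := eventually_atTop.1 htail
  refine ⟨Set.Ici (min (a - r) (N - r)), _, fun i hi => min_le_of_left_le hi.1,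
    (Set.finite_Icc (min (a - r) (N - r)) P).subset fun i hi => ⟨hi.1, ?_⟩,
    isSmallCut_Ici hN (by omega)⟩
  exact le_of_lt (lt_of_not_ge fun h => (hP i h).not_gt hi.2)

lemma CrossProp.eventually_atBot {D : Set ℤ} (h : CrossProp x y D) (hD : D.Finite) :
    (∀ᶠ i in atBot, x i ≤ y i) ∨ (∀ᶠ i in atBot, y i ≤ x i) := by
  obtain ⟨p, hp⟩ := hD.bddBelow
  have hleft : ∀ᶠ i in atBot, i ∈ {i | ∀ j ∈ D, i < j} :=
    (eventually_lt_atBot p).mono fun i hi j hj => hi.trans_le (hp hj)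
  exact h.2.1.imp (fun h' => hleft.mono h') (fun h' => hleft.mono h')

lemma CrossProp.eventually_atTop {D : Set ℤ} (h : CrossProp x y D) (hD : D.Finite) :
    (∀ᶠ i in atTop, x i ≤ y i) ∨ (∀ᶠ i in atTop, y i ≤ x i) := by
  obtain ⟨p, hp⟩ := hD.bddAbove
  have hright : ∀ᶠ i in atTop, i ∈ {i | ∀ j ∈ D, j < i} :=
    (eventually_gt_atTop p).mono fun i hi j hj => (hp hj).trans_lt hi
  exact h.2.2.imp (fun h' => hright.mono h') (fun h' => hright.mono h')

theorem isGlobalMin_min_of_crossProp (hsm : ∀ j, ContDiff ℝ 2 (uncurry (f j)))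
    (hbd : ∀ j ν μ, |d12 (f j) ν μ| ≤ C) (htw : ∀ j ∈ Icc 1 r, ∀ ν μ, d12 (f j) ν μ ≤ 0)
    (hx : IsGlobalMin r f x) (hy : IsGlobalMin r f y) {D : Set ℤ} (hD : CrossProp x y D)
    (hfin : D.Finite)
    (hasym : Tendsto (fun i => |x i - y i|) atTop (𝓝 0) ∨
      Tendsto (fun i => |x i - y i|) atBot (𝓝 0)) :
    IsGlobalMin r f (fun i => min (x i) (y i)) := by
  rcases hasym with h | h
  · rcases hD.eventually_atBot hfin with ht | ht
    · exact isGlobalMin_min_of_tendsto_atTop hsm hbd htw hx hy ht h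
    · simpa only [min_comm] using isGlobalMin_min_of_tendsto_atTop hsm hbd htw hy hx ht
        (by simpa only [abs_sub_comm] using h)
  · rcases hD.eventually_atTop hfin with ht | ht
    · exact isGlobalMin_min_of_tendsto_atBot hsm hbd htw hx hy ht h
    · simpa only [min_comm] using isGlobalMin_min_of_tendsto_atBot hsm hbd htw hy hx ht
        (by simpa only [abs_sub_comm] using h)

end Asymptotic

theorem stmt13_general (r : ℕ) (hr : 1 ≤ r) (K lam : ℝ) (hlam : 0 < lam)
    (E : LocalEnergy r K lam) (x y : ℤ → ℝ)
    (hx : IsGlobalMin r E.f x) (hy : IsGlobalMin r E.f y)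
    (D : Set ℤ) (hD : IsCrossingDomain x y D) (hfin : D.Finite)
    (hasym : Tendsto (fun i : ℤ => |x i - y i|) atTop (𝓝 0) ∨
             Tendsto (fun i : ℤ => |x i - y i|) atBot (𝓝 0)) :
    (∀ i : ℤ, y i ≤ x i) ∨ (∀ i : ℤ, x i ≤ y i) := by
  have hmin := isGlobalMin_min_of_crossProp E.smooth E.bound12
    (fun j hj ν μ => (E.twist j hj ν μ).trans (neg_nonpos.2 hlam.le)) hx hy hD.1 hfin hasym
  have hmaxp := fun {z : ℤ → ℝ} (hz : IsGlobalMin r E.f z) =>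
    eq_of_le_of_solvesEL E.smooth hr hlam E.twist (hmin.solvesEL E.smooth) (hz.solvesEL E.smooth)
  rcases le_total (x 0) (y 0) with h0 | h0
  · have hmx := hmaxp hx (fun i => min_le_left _ _) (min_eq_left h0)
    exact .inr fun i => congrFun hmx i ▸ min_le_right (x i) (y i)
  · have hmy := hmaxp hy (fun i => min_le_right _ _) (min_eq_right h0)
    exact .inl fun i => congrFun hmy i ▸ min_le_left (x i) (y i)

/-- Asymptotic global minimizers with finite crossing domain are ordered:  if
`|x_i - y_i| → 0` as `i → +∞` or as `i → -∞`, then `x ≥ y` or `y ≥ x` componentwise. -/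
theorem stmt13 (r : ℕ) (hr : 1 ≤ r) (K lam : ℝ) (hK : 0 < K) (hlam : 0 < lam)
    (E : LocalEnergy r K lam) (x y : ℤ → ℝ)
    (hx : IsGlobalMin r E.f x) (hy : IsGlobalMin r E.f y)
    (D : Set ℤ) (hD : IsCrossingDomain x y D) (hfin : D.Finite)
    (hasym : Tendsto (fun i : ℤ => |x i - y i|) atTop (𝓝 0) ∨
             Tendsto (fun i : ℤ => |x i - y i|) atBot (𝓝 0)) :
    (∀ i : ℤ, y i ≤ x i) ∨ (∀ i : ℤ, x i ≤ y i) :=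
  stmt13_general r hr K lam hlam E x y hx hy D hD hfin hasym
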